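/- Every orbit of the polyurethane group 𝒫_n acting on S_n contains exactly one 231-avoiding permutation and exactly one 132-avoiding permutation. -/

import Mathlib

/-- `l` is a permutation of `{1, …, n}`, written as a word. -/
def IsPermList (n : ℕ) (l : List ℕ) : Prop := l.Perm (List.range' 1 n)

/-- The word obtained from `l` by exchanging the positions of the entries `i` and `i+1`. -/
def swapEntries (i : ℕ) (l : List ℕ) : List ℕ :=
  l.map fun x => if x = i then i + 1 else if x = i + 1 then i else x

/-- Some entry larger than `i+1` appears (strictly) between the entries `i` and `i+1`
in the word `l`. -/
def ToggleApplies (i : ℕ) (l : List ℕ) : Prop :=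
  ∃ a ∈ l, i + 1 < a ∧
    min (l.idxOf i) (l.idxOf (i + 1)) < l.idxOf a ∧
    l.idxOf a < max (l.idxOf i) (l.idxOf (i + 1))

open scoped Classical in
/-- The polyurethane toggle `p i`. -/
noncomputable def toggle (i : ℕ) (l : List ℕ) : List ℕ :=
  if ToggleApplies i l then swapEntries i l else l

/-- `l` contains the pattern 231. -/
def Contains231 (l : List ℕ) : Prop :=
  ∃ j₁ j₂ j₃, j₁ < j₂ ∧ j₂ < j₃ ∧ j₃ < l.length ∧
    l.getD j₃ 0 < l.getD j₁ 0 ∧ l.getD j₁ 0 < l.getD j₂ 0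

/-- `l` avoids the pattern 231. -/
def Avoids231 (l : List ℕ) : Prop := ¬ Contains231 l

/-- `l` avoids the pattern 132. -/
def Avoids132 (l : List ℕ) : Prop :=
  ¬ ∃ j₁ j₂ j₃, j₁ < j₂ ∧ j₂ < j₃ ∧ j₃ < l.length ∧
    l.getD j₁ 0 < l.getD j₃ 0 ∧ l.getD j₃ 0 < l.getD j₂ 0

/-- `l` avoids the pattern 312. -/
def Avoids312 (l : List ℕ) : Prop :=
  ¬ ∃ j₁ j₂ j₃, j₁ < j₂ ∧ j₂ < j₃ ∧ j₃ < l.length ∧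
    l.getD j₂ 0 < l.getD j₃ 0 ∧ l.getD j₃ 0 < l.getD j₁ 0

/-- One application of a polyurethane toggle `p i`, `i ∈ [n-1]`. -/
def ToggleStep (n : ℕ) (x y : List ℕ) : Prop :=
  ∃ i, 1 ≤ i ∧ i ≤ n - 1 ∧ y = toggle i x

/-- `x` and `y` lie in the same orbit of the polyurethane group
`𝒫ₙ = ⟨p₁, …, p_{n-1}⟩` acting on permutations. -/
def OrbitRel (n : ℕ) : List ℕ → List ℕ → Prop := Relation.EqvGen (ToggleStep n)

/-!
A toggle `p_i` exchanges `i` and `i+1` only when a larger entry `c` lies between them. Such a swap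
does not change, for any entry, how many entries directly after it are smaller (`rightSpans`): the
run starting at `i` or `i+1` is cut off by `c` before it reaches the other one, and no other entry
tells `i` from `i+1`. In a 231-avoiding permutation the smaller entries to the right of an entry all
come first, so `rightSpans` is its Lehmer code, which determines the permutation; hence an orbit
contains at most one 231-avoider. Conversely, a 231 pattern can be chosen with its `2` and `1`
equal to consecutive values `i+1` and `i`; then `p_i` applies and strictly increases
`∑ j * l[j]`, so a maximiser of this weight on the finite orbit avoids 231. Reversal exchanges 132
and 231 and commutes with the toggles.
-/

open Relation

namespace List

variable {α : Type*}

theorem exists_getD_triple_iff (l : List α) (d : α) (R : α → α → α → Prop) :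
    (∃ j₁ j₂ j₃, j₁ < j₂ ∧ j₂ < j₃ ∧ j₃ < l.length ∧
        R (l.getD j₁ d) (l.getD j₂ d) (l.getD j₃ d)) ↔
      ∃ A c D, l = A ++ c :: D ∧ ∃ x ∈ A, ∃ z ∈ D, R x c z := by
  constructor
  · rintro ⟨j₁, j₂, j₃, h₁₂, h₂₃, h₃, hR⟩
    refine ⟨l.take j₂, l[j₂], l.drop (j₂ + 1), ?_, l[j₁], ?_, l[j₃], ?_, ?_⟩
    · rw [getElem_cons_drop, take_append_drop]
    · rw [mem_iff_getElem]
      exact ⟨j₁, by rw [length_take]; omega, getElem_take⟩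
    · rw [mem_iff_getElem]
      exact ⟨j₃ - (j₂ + 1), by rw [length_drop]; omega, by rw [getElem_drop]; congr 1; omega⟩
    · simpa only [getD_eq_getElem _ _ (by omega : j₁ < l.length),
        getD_eq_getElem _ _ (by omega : j₂ < l.length),
        getD_eq_getElem _ _ h₃] using hR
  · rintro ⟨A, c, D, rfl, x, hx, z, hz, hR⟩
    obtain ⟨j, hj, rfl⟩ := mem_iff_getElem.1 hx
    obtain ⟨k, hk, rfl⟩ := mem_iff_getElem.1 hz
    refine ⟨j, A.length, A.length + 1 + k, hj, by omega,
      by rw [length_append, length_cons]; omega, ?_⟩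
    rw [getD_append _ _ _ _ hj, getD_append_right _ _ _ _ le_rfl,
      getD_append_right _ _ _ _ (by omega)]
    rw [show A.length + 1 + k - A.length = k + 1 by omega, Nat.sub_self]
    simpa only [getD_cons_zero, getD_cons_succ, getD_eq_getElem _ _ hj,
      getD_eq_getElem _ _ hk] using hR

theorem idxOf_lt_idxOf_lt_iff [BEq α] [LawfulBEq α] {l : List α} (hl : l.Nodup) {x c y : α}
    (hy : y ∈ l) :
    l.idxOf x < l.idxOf c ∧ l.idxOf c < l.idxOf y ↔ ∃ A D, l = A ++ c :: D ∧ x ∈ A ∧ y ∈ D := by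
  constructor
  · rintro ⟨hxc, hcy⟩
    have hc : l.idxOf c < l.length := hcy.trans (idxOf_lt_length_of_mem hy)
    have hx : l.idxOf x < l.length := hxc.trans hc
    refine ⟨l.take (l.idxOf c), l.drop (l.idxOf c + 1), ?_, ?_, ?_⟩
    · conv_lhs => rw [← take_append_drop (l.idxOf c) l, drop_eq_getElem_cons hc,
        getElem_idxOf hc]
    · rw [mem_iff_getElem]
      exact ⟨l.idxOf x, by rw [length_take]; omega, by rw [getElem_take, getElem_idxOf hx]⟩
    · rw [mem_iff_getElem]
      have hy' := idxOf_lt_length_of_mem hy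
      exact ⟨l.idxOf y - (l.idxOf c + 1), by rw [length_drop]; omega, by
        rw [getElem_drop]; convert getElem_idxOf hy' using 2; omega⟩
  · rintro ⟨A, D, rfl, hx, hy⟩
    have hdisj := (nodup_append.1 hl).2.2
    have hcA : c ∉ A := fun h => hdisj _ h _ mem_cons_self rfl
    have hyA : y ∉ A := fun h => hdisj _ h _ (mem_cons_of_mem _ hy) rfl
    have hyc : y ≠ c := fun h => (nodup_cons.1 (nodup_append.1 hl).2.1).1 (h ▸ hy)
    rw [idxOf_append_of_mem hx, idxOf_append_of_notMem hcA,
      idxOf_append_of_notMem hyA, idxOf_cons_self, idxOf_cons_ne _ hyc.symm]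
    exact ⟨by have := idxOf_lt_length_of_mem hx; omega, by omega⟩

theorem idxOf_map_of_injective {β : Type*} [BEq α] [LawfulBEq α] [BEq β] [LawfulBEq β]
    {f : α → β} (hf : f.Injective) (l : List α) (x : α) :
    (l.map f).idxOf (f x) = l.idxOf x := by
  induction l with
  | nil => rfl
  | cons y l ih => by_cases h : y = x <;> simp [h, hf.eq_iff, ih]

theorem length_takeWhile_congr {p q : α → Bool} {L L' : List α} (h : L.map p = L'.map q) :
    (L.takeWhile p).length = (L'.takeWhile q).length := by
  have key : ∀ (p : α → Bool) (L : List α),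
      (L.takeWhile p).length = ((L.map p).takeWhile id).length := fun p L => by
    rw [takeWhile_map, length_map]
    rfl
  rw [key, key q, h]

theorem takeWhile_append_of_mem_of_not {p : α → Bool} {B X : List α} {c : α} (hc : c ∈ B)
    (hpc : p c = false) : (B ++ X).takeWhile p = B.takeWhile p := by
  induction B with
  | nil => simp at hc
  | cons b B ih =>
    cases hb : p b
    · simp [hb]
    · have hcB : c ∈ B := (mem_cons.1 hc).resolve_left (by rintro rfl; simp_all)
      simp [hb, ih hcB]

section Swap

variable {A B C : List α} {u v : α}

theorem perm_swap_split : (A ++ v :: B ++ u :: C).Perm (A ++ u :: B ++ v :: C) := by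
  simp only [append_assoc, cons_append, perm_append_left_iff]
  exact ((perm_middle.cons v).trans (.swap u v _)).trans (perm_middle.cons u).symm

theorem notMem_of_nodup_split (hl : (A ++ u :: B ++ v :: C).Nodup) :
    u ∉ A ++ B ++ C ∧ v ∉ A ++ B ++ C := by
  have hperm : (A ++ u :: B ++ v :: C).Perm (u :: v :: (A ++ B ++ C)) := by
    simp only [append_assoc, cons_append]
    refine perm_middle.trans (Perm.cons u ?_)
    simpa using (perm_middle (l₁ := A ++ B) (a := v) (l₂ := C))
  have := hperm.nodup_iff.1 hl
  simp_all

theorem map_swap_split [DecidableEq α] (hl : (A ++ u :: B ++ v :: C).Nodup) :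
    (A ++ u :: B ++ v :: C).map (Equiv.swap u v) = A ++ v :: B ++ u :: C := by
  have hfix : ∀ X : List α, X ⊆ A ++ B ++ C → X.map (Equiv.swap u v) = X := fun X hX => by
    refine (map_congr_left fun z hz => ?_).trans (map_id X)
    exact Equiv.swap_apply_of_ne_of_ne (fun h => (notMem_of_nodup_split hl).1 (h ▸ hX hz))
      (fun h => (notMem_of_nodup_split hl).2 (h ▸ hX hz))
  simp [hfix A (by simp), hfix B (by simp), hfix C (by simp)]

end Swap

end List

theorem contains231_iff {l : List ℕ} :
    Contains231 l ↔ ∃ A c D, l = A ++ c :: D ∧ ∃ b ∈ A, ∃ a ∈ D, a < b ∧ b < c :=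
  List.exists_getD_triple_iff l 0 fun b c a => a < b ∧ b < c

theorem avoids132_iff_avoids231_reverse {l : List ℕ} : Avoids132 l ↔ Avoids231 l.reverse := by
  rw [Avoids132, List.exists_getD_triple_iff l 0 fun a c b => a < b ∧ b < c, Avoids231,
    contains231_iff, not_iff_not]
  constructor
  · rintro ⟨A, c, D, rfl, a, ha, b, hb, hab, hbc⟩
    exact ⟨D.reverse, c, A.reverse, by simp, b, by simpa using hb, a, by simpa using ha, hab, hbc⟩
  · rintro ⟨A, c, D, hl, b, hb, a, ha, hab, hbc⟩
    refine ⟨D.reverse, c, A.reverse, ?_, a, by simpa using ha, b, by simpa using hb, hab, hbc⟩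
    simpa using congrArg List.reverse hl

theorem toggle_of_toggleApplies {i : ℕ} {l : List ℕ} (h : ToggleApplies i l) :
    toggle i l = swapEntries i l :=
  if_pos h

theorem toggle_of_not_toggleApplies {i : ℕ} {l : List ℕ} (h : ¬ ToggleApplies i l) :
    toggle i l = l :=
  if_neg h

theorem swapEntries_eq_map_swap (i : ℕ) (l : List ℕ) :
    swapEntries i l = l.map (Equiv.swap i (i + 1)) :=
  rfl

theorem toggleApplies_iff {i : ℕ} {l : List ℕ} (hl : l.Nodup) (hi : i ∈ l) (hi₁ : i + 1 ∈ l) :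
    ToggleApplies i l ↔ ∃ A c D, l = A ++ c :: D ∧ i + 1 < c ∧
      (i ∈ A ∧ i + 1 ∈ D ∨ i + 1 ∈ A ∧ i ∈ D) := by
  constructor
  · rintro ⟨c, -, hc, hmin, hmax⟩
    rcases (by omega : (l.idxOf i < l.idxOf c ∧ l.idxOf c < l.idxOf (i + 1)) ∨
        (l.idxOf (i + 1) < l.idxOf c ∧ l.idxOf c < l.idxOf i)) with h | h
    · obtain ⟨A, D, hl', hA, hD⟩ := (List.idxOf_lt_idxOf_lt_iff hl hi₁).1 h
      exact ⟨A, c, D, hl', hc, .inl ⟨hA, hD⟩⟩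
    · obtain ⟨A, D, hl', hA, hD⟩ := (List.idxOf_lt_idxOf_lt_iff hl hi).1 h
      exact ⟨A, c, D, hl', hc, .inr ⟨hA, hD⟩⟩
  · rintro ⟨A, c, D, hl', hc, h | h⟩
    · have := (List.idxOf_lt_idxOf_lt_iff hl hi₁).2 ⟨A, D, hl', h⟩
      exact ⟨c, by simp [hl'], hc, by omega, by omega⟩
    · have := (List.idxOf_lt_idxOf_lt_iff hl hi).2 ⟨A, D, hl', h⟩
      exact ⟨c, by simp [hl'], hc, by omega, by omega⟩

theorem toggleApplies_swapEntries_iff {i : ℕ} {l : List ℕ} :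
    ToggleApplies i (swapEntries i l) ↔ ToggleApplies i l := by
  set σ := Equiv.swap i (i + 1)
  have hidx : ∀ x, (l.map σ).idxOf x = l.idxOf (σ x) := fun x => by
    conv_lhs => rw [← σ.apply_symm_apply x]
    rw [List.idxOf_map_of_injective σ.injective, Equiv.symm_swap]
  have hfix : ∀ a, i + 1 < a → σ a = a := fun a ha =>
    Equiv.swap_apply_of_ne_of_ne (by omega) (by omega)
  have hmem : ∀ a, i + 1 < a → (a ∈ l.map σ ↔ a ∈ l) := fun a ha => by
    conv_lhs => rw [← hfix a ha]
    exact List.mem_map_of_injective σ.injective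
  unfold ToggleApplies
  rw [swapEntries_eq_map_swap, hidx, hidx, Equiv.swap_apply_left, Equiv.swap_apply_right,
    min_comm, max_comm]
  refine exists_congr fun a => ⟨fun ⟨ha, hlt, h⟩ => ⟨(hmem a hlt).1 ha, hlt, ?_⟩,
    fun ⟨ha, hlt, h⟩ => ⟨(hmem a hlt).2 ha, hlt, ?_⟩⟩
  · rwa [hidx, hfix a hlt] at h
  · rwa [hidx, hfix a hlt]

theorem toggle_toggle (i : ℕ) (l : List ℕ) : toggle i (toggle i l) = l := by
  by_cases h : ToggleApplies i l
  · have h' := toggleApplies_swapEntries_iff.2 h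
    rw [toggle_of_toggleApplies h, toggle_of_toggleApplies h', swapEntries_eq_map_swap,
      swapEntries_eq_map_swap, List.map_map]
    simp [Function.comp_def]
  · rw [toggle_of_not_toggleApplies h, toggle_of_not_toggleApplies h]

theorem toggle_of_split {i c u v : ℕ} {l L R : List ℕ} (hl : l.Nodup) (hsplit : l = L ++ c :: R)
    (hc : i + 1 < c) (hu : u ∈ L) (hv : v ∈ R) (huv : u = i ∧ v = i + 1 ∨ u = i + 1 ∧ v = i) :
    ∃ A B C, l = A ++ u :: B ++ v :: C ∧ c ∈ B ∧ toggle i l = A ++ v :: B ++ u :: C := by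
  obtain ⟨A, B₁, rfl⟩ := List.append_of_mem hu
  obtain ⟨B₂, C, rfl⟩ := List.append_of_mem hv
  have hsplit' : l = A ++ u :: (B₁ ++ c :: B₂) ++ v :: C := by simp [hsplit]
  refine ⟨A, B₁ ++ c :: B₂, C, hsplit', by simp, ?_⟩
  have happ : ToggleApplies i l := by
    have hmem : i ∈ l ∧ i + 1 ∈ l := by
      rcases huv with ⟨rfl, rfl⟩ | ⟨rfl, rfl⟩ <;> simp [hsplit']
    rw [toggleApplies_iff hl hmem.1 hmem.2]
    exact ⟨_, c, _, hsplit, hc, by rcases huv with ⟨rfl, rfl⟩ | ⟨rfl, rfl⟩ <;> simp⟩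
  have hσ : Equiv.swap i (i + 1) = Equiv.swap u v := by
    rcases huv with ⟨rfl, rfl⟩ | ⟨rfl, rfl⟩
    · rfl
    · exact Equiv.swap_comm _ _
  rw [toggle_of_toggleApplies happ, swapEntries_eq_map_swap, hσ, hsplit']
  exact List.map_swap_split (hsplit' ▸ hl)

theorem exists_split_of_toggleApplies {i : ℕ} {l : List ℕ} (hl : l.Nodup) (hi : i ∈ l)
    (hi₁ : i + 1 ∈ l) (h : ToggleApplies i l) :
    ∃ A B C c u v, l = A ++ u :: B ++ v :: C ∧ toggle i l = A ++ v :: B ++ u :: C ∧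
      c ∈ B ∧ i + 1 < c ∧ (u = i ∧ v = i + 1 ∨ u = i + 1 ∧ v = i) := by
  obtain ⟨L, c, R, hsplit, hc, ⟨hu, hv⟩ | ⟨hu, hv⟩⟩ := (toggleApplies_iff hl hi hi₁).1 h
  · obtain ⟨A, B, C, hl', hcB, ht⟩ := toggle_of_split hl hsplit hc hu hv (.inl ⟨rfl, rfl⟩)
    exact ⟨A, B, C, c, _, _, hl', ht, hcB, hc, .inl ⟨rfl, rfl⟩⟩
  · obtain ⟨A, B, C, hl', hcB, ht⟩ := toggle_of_split hl hsplit hc hu hv (.inr ⟨rfl, rfl⟩)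
    exact ⟨A, B, C, c, _, _, hl', ht, hcB, hc, .inr ⟨rfl, rfl⟩⟩

theorem toggle_perm {i : ℕ} {l : List ℕ} (hl : l.Nodup) (hi : i ∈ l) (hi₁ : i + 1 ∈ l) :
    (toggle i l).Perm l := by
  by_cases h : ToggleApplies i l
  · obtain ⟨A, B, C, -, u, v, hl', ht, -⟩ := exists_split_of_toggleApplies hl hi hi₁ h
    rw [ht, hl']
    exact List.perm_swap_split
  · rw [toggle_of_not_toggleApplies h]

theorem ToggleApplies.reverse {i : ℕ} {l : List ℕ} (hl : l.Nodup) (hi : i ∈ l) (hi₁ : i + 1 ∈ l)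
    (h : ToggleApplies i l) : ToggleApplies i l.reverse := by
  obtain ⟨A, c, D, rfl, hc, hA⟩ := (toggleApplies_iff hl hi hi₁).1 h
  rw [toggleApplies_iff (List.nodup_reverse.2 hl) (List.mem_reverse.2 hi)
    (List.mem_reverse.2 hi₁)]
  exact ⟨D.reverse, c, A.reverse, by simp, hc, by simp only [List.mem_reverse]; tauto⟩

theorem toggle_reverse {i : ℕ} {l : List ℕ} (hl : l.Nodup) (hi : i ∈ l) (hi₁ : i + 1 ∈ l) :
    toggle i l.reverse = (toggle i l).reverse := by
  by_cases h : ToggleApplies i l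
  · rw [toggle_of_toggleApplies h, toggle_of_toggleApplies (h.reverse hl hi hi₁),
      swapEntries_eq_map_swap, swapEntries_eq_map_swap, List.map_reverse]
  · have h' : ¬ ToggleApplies i l.reverse := fun h' => h (by
      simpa using h'.reverse (List.nodup_reverse.2 hl) (List.mem_reverse.2 hi)
        (List.mem_reverse.2 hi₁))
    rw [toggle_of_not_toggleApplies h, toggle_of_not_toggleApplies h']

theorem IsPermList.nodup {n : ℕ} {l : List ℕ} (hl : IsPermList n l) : l.Nodup :=
  hl.nodup_iff.2 List.nodup_range'

theorem IsPermList.mem_iff {n x : ℕ} {l : List ℕ} (hl : IsPermList n l) :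
    x ∈ l ↔ 1 ≤ x ∧ x ≤ n := by
  rw [List.Perm.mem_iff hl, List.mem_range'_1]
  omega

theorem isPermList_reverse_iff {n : ℕ} {l : List ℕ} : IsPermList n l.reverse ↔ IsPermList n l :=
  ⟨(List.reverse_perm l).symm.trans, (List.reverse_perm l).trans⟩

theorem ToggleStep.symm {n : ℕ} {x y : List ℕ} (h : ToggleStep n x y) : ToggleStep n y x := by
  obtain ⟨i, h₁, h₂, rfl⟩ := h
  exact ⟨i, h₁, h₂, (toggle_toggle i x).symm⟩

instance (n : ℕ) : Std.Symm (ToggleStep n) := ⟨fun _ _ => ToggleStep.symm⟩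

theorem orbitRel_iff_reflTransGen {n : ℕ} {x y : List ℕ} :
    OrbitRel n x y ↔ ReflTransGen (ToggleStep n) x y := by
  rw [OrbitRel, EqvGen.eqvGen_eq_reflTransGen]

theorem ToggleStep.isPermList {n : ℕ} {x y : List ℕ} (h : ToggleStep n x y)
    (hx : IsPermList n x) : IsPermList n y := by
  obtain ⟨i, h₁, h₂, rfl⟩ := h
  exact (toggle_perm hx.nodup (hx.mem_iff.2 ⟨h₁, by omega⟩)
    (hx.mem_iff.2 ⟨by omega, by omega⟩)).trans hx

theorem ToggleStep.reverse {n : ℕ} {x y : List ℕ} (h : ToggleStep n x y)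
    (hx : IsPermList n x) : ToggleStep n x.reverse y.reverse := by
  obtain ⟨i, h₁, h₂, rfl⟩ := h
  exact ⟨i, h₁, h₂, (toggle_reverse hx.nodup (hx.mem_iff.2 ⟨h₁, by omega⟩)
    (hx.mem_iff.2 ⟨by omega, by omega⟩)).symm⟩

theorem OrbitRel.isPermList {n : ℕ} {x y : List ℕ} (h : OrbitRel n x y)
    (hx : IsPermList n x) : IsPermList n y := by
  rw [orbitRel_iff_reflTransGen] at h
  induction h with
  | refl => exact hx
  | tail _ hstep ih => exact hstep.isPermList ih

theorem OrbitRel.reverse {n : ℕ} {x y : List ℕ} (h : OrbitRel n x y)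
    (hx : IsPermList n x) : OrbitRel n x.reverse y.reverse := by
  rw [orbitRel_iff_reflTransGen] at h
  induction h with
  | refl => exact EqvGen.refl _
  | tail hxb hstep ih =>
    exact EqvGen.trans _ _ _ ih (EqvGen.rel _ _
      (hstep.reverse ((orbitRel_iff_reflTransGen.2 hxb).isPermList hx)))

theorem orbitRel_reverse_iff {n : ℕ} {l m : List ℕ} (hl : IsPermList n l) :
    OrbitRel n l.reverse m.reverse ↔ OrbitRel n l m :=
  ⟨fun h => by simpa using h.reverse (isPermList_reverse_iff.2 hl), fun h => h.reverse hl⟩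

section Spans

variable {α : Type*} [LinearOrder α]

/-- The sizes of the right subtrees in the decreasing binary tree of the word. -/
def rightSpans : List α → List ℕ
  | [] => []
  | x :: t => (t.takeWhile (· < x)).length :: rightSpans t

def lehmerCode : List α → List ℕ
  | [] => []
  | x :: t => t.countP (· < x) :: lehmerCode t

theorem rightSpans_append_congr {A R R' : List α} (hR : rightSpans R = rightSpans R')
    (hA : ∀ a ∈ A, R.map (fun z => decide (z < a)) = R'.map (fun z => decide (z < a))) :
    rightSpans (A ++ R) = rightSpans (A ++ R') := by
  induction A with
  | nil => simpa
  | cons a A ih =>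
    simp only [List.cons_append, rightSpans]
    congr 1
    · exact List.length_takeWhile_congr (by simp [hA a List.mem_cons_self])
    · exact ih fun b hb => hA b (List.mem_cons_of_mem a hb)

theorem rightSpans_swap {A B C : List α} {u v c : α} (hc : c ∈ B) (huc : u < c)
    (hsep : ∀ z ∈ A ++ B ++ C, (z < u ↔ z < v) ∧ (u < z ↔ v < z)) :
    rightSpans (A ++ u :: B ++ v :: C) = rightSpans (A ++ v :: B ++ u :: C) := by
  have hvc : v < c := (hsep c (by simp [hc])).2.1 huc
  have hbelow : ∀ X ⊆ A ++ B ++ C,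
      X.map (fun z => decide (z < u)) = X.map (fun z => decide (z < v)) := fun X hX =>
    List.map_congr_left fun z hz => by simp [(hsep z (hX hz)).1]
  have habove : ∀ a ∈ A ++ B ++ C, decide (u < a) = decide (v < a) := fun a ha => by
    simp [(hsep a ha).2]
  simp only [List.append_assoc, List.cons_append]
  refine rightSpans_append_congr ?_ fun a ha => by simp [habove a (by simp [ha])]
  simp only [rightSpans]
  congr 1
  · rw [List.takeWhile_append_of_mem_of_not hc (by simpa using huc.le),
      List.takeWhile_append_of_mem_of_not hc (by simpa using hvc.le)]
    exact List.length_takeWhile_congr (hbelow B (by simp))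
  · refine rightSpans_append_congr ?_ fun b hb => by simp [habove b (by simp [hb])]
    simp only [rightSpans]
    rw [List.length_takeWhile_congr (hbelow C (by simp))]

theorem countP_lt_countP_of_perm_cons {x y : α} {t₁ t₂ : List α} (hp : (x :: t₁).Perm (y :: t₂))
    (hxy : x < y) : t₁.countP (· < x) < t₂.countP (· < y) :=
  calc t₁.countP (· < x) ≤ t₁.countP (· < y) :=
        List.countP_mono_left fun z _ hz => by simpa using (by simpa using hz : z < x).trans hxy
    _ < (x :: t₁).countP (· < y) := by simp [hxy]
    _ = (y :: t₂).countP (· < y) := hp.countP_eq _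
    _ = t₂.countP (· < y) := by simp

theorem eq_of_lehmerCode_eq {l₁ l₂ : List α} (hp : l₁.Perm l₂)
    (h : lehmerCode l₁ = lehmerCode l₂) : l₁ = l₂ := by
  induction l₁ generalizing l₂ with
  | nil => exact (List.Perm.nil_eq hp)
  | cons x t₁ ih =>
    obtain _ | ⟨y, t₂⟩ := l₂
    · exact absurd hp.length_eq (by simp)
    simp only [lehmerCode, List.cons.injEq] at h
    obtain rfl : x = y := by
      rcases lt_trichotomy x y with hxy | hxy | hxy
      · exact absurd h.1 (countP_lt_countP_of_perm_cons hp hxy).ne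
      · exact hxy
      · exact absurd h.1 (countP_lt_countP_of_perm_cons hp.symm hxy).ne'
    rw [ih hp.cons_inv h.2]

end Spans

theorem length_takeWhile_eq_countP {x : ℕ} {t : List ℕ} (hl : (x :: t).Nodup)
    (h : Avoids231 (x :: t)) : (t.takeWhile (· < x)).length = t.countP (· < x) := by
  rw [Avoids231, contains231_iff] at h
  conv_rhs => rw [← List.takeWhile_append_dropWhile (p := fun z => decide (z < x)) (l := t)]
  rw [List.countP_append, (List.countP_eq_length).2 fun z hz =>
    List.mem_takeWhile_imp (p := fun z => decide (z < x)) hz]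
  suffices (t.dropWhile fun z => decide (z < x)).countP (· < x) = 0 by omega
  rcases hd : t.dropWhile fun z => decide (z < x) with _ | ⟨c, D⟩
  · rfl
  have hct : c ∈ t := (List.dropWhile_sublist _).subset (by rw [hd]; exact List.mem_cons_self)
  have hc : ¬ c < x := by
    simpa [hd] using List.head_dropWhile_not (fun z => decide (z < x)) (l := t) (by simp [hd])
  have hxc : x < c := lt_of_le_of_ne (not_lt.1 hc) fun e => (List.nodup_cons.1 hl).1 (e ▸ hct)
  refine List.countP_eq_zero.2 fun z hz hzx => ?_
  rcases List.mem_cons.1 hz with rfl | hzD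
  · exact hc (by simpa using hzx)
  · refine h ⟨x :: t.takeWhile (· < x), c, D, ?_, x, List.mem_cons_self, z, hzD,
      by simpa using hzx, hxc⟩
    rw [List.cons_append, ← hd, List.takeWhile_append_dropWhile]

theorem Avoids231.of_cons {x : ℕ} {t : List ℕ} (h : Avoids231 (x :: t)) : Avoids231 t := by
  rw [Avoids231, contains231_iff] at h ⊢
  rintro ⟨A, c, D, rfl, b, hb, a, ha, hab, hbc⟩
  exact h ⟨x :: A, c, D, rfl, b, List.mem_cons_of_mem x hb, a, ha, hab, hbc⟩

theorem rightSpans_eq_lehmerCode {l : List ℕ} (hl : l.Nodup) (h : Avoids231 l) :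
    rightSpans l = lehmerCode l := by
  induction l with
  | nil => rfl
  | cons x t ih =>
    simp only [rightSpans, lehmerCode]
    rw [length_takeWhile_eq_countP hl h, ih hl.of_cons h.of_cons]

theorem rightSpans_toggle {i : ℕ} {l : List ℕ} (hl : l.Nodup) (hi : i ∈ l) (hi₁ : i + 1 ∈ l) :
    rightSpans (toggle i l) = rightSpans l := by
  by_cases h : ToggleApplies i l
  · obtain ⟨A, B, C, c, u, v, hl', ht, hc, hic, huv⟩ := exists_split_of_toggleApplies hl hi hi₁ h
    obtain ⟨hu, hv⟩ := List.notMem_of_nodup_split (hl' ▸ hl)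
    have hsep : ∀ z ∈ A ++ B ++ C, (z < v ↔ z < u) ∧ (v < z ↔ u < z) := fun z hz => by
      have : z ≠ u := fun e => hu (e ▸ hz)
      have : z ≠ v := fun e => hv (e ▸ hz)
      omega
    rw [ht, hl']
    exact rightSpans_swap hc (by omega) hsep
  · rw [toggle_of_not_toggleApplies h]

theorem OrbitRel.rightSpans_eq {n : ℕ} {x y : List ℕ} (h : OrbitRel n x y)
    (hx : IsPermList n x) : rightSpans y = rightSpans x := by
  rw [orbitRel_iff_reflTransGen] at h
  induction h with
  | refl => rfl
  | tail hxb hstep ih =>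
    obtain ⟨i, h₁, h₂, rfl⟩ := hstep
    have hb := (orbitRel_iff_reflTransGen.2 hxb).isPermList hx
    rw [rightSpans_toggle hb.nodup (hb.mem_iff.2 ⟨h₁, by omega⟩)
      (hb.mem_iff.2 ⟨by omega, by omega⟩), ih]

theorem eq_of_orbitRel_of_avoids231 {n : ℕ} {x y : List ℕ} (hx : IsPermList n x)
    (hxy : OrbitRel n x y) (hax : Avoids231 x) (hay : Avoids231 y) : x = y := by
  have hy := hxy.isPermList hx
  refine eq_of_lehmerCode_eq (List.Perm.trans hx (List.Perm.symm hy)) ?_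
  rw [← rightSpans_eq_lehmerCode hx.nodup hax, ← rightSpans_eq_lehmerCode hy.nodup hay,
    hxy.rightSpans_eq hx]

/-- `weight l = ∑ j, j * l[j]`. -/
def weight : List ℕ → ℕ
  | [] => 0
  | _ :: t => t.sum + weight t

theorem weight_le_weight_of_le {B C : List ℕ} {u v : ℕ} (h : u ≤ v) :
    weight (B ++ u :: C) ≤ weight (B ++ v :: C) := by
  induction B with
  | nil => simp [weight]
  | cons b B ih =>
    simp only [List.cons_append, weight, List.sum_append, List.sum_cons]
    omega

theorem weight_lt_weight_swap {A B C : List ℕ} {u v : ℕ} (h : u < v) :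
    weight (A ++ v :: B ++ u :: C) < weight (A ++ u :: B ++ v :: C) := by
  induction A with
  | nil =>
    have := weight_le_weight_of_le (B := B) (C := C) h.le
    simp only [List.nil_append, List.cons_append, weight, List.sum_append, List.sum_cons]
    omega
  | cons a A ih =>
    simp only [List.append_assoc, List.cons_append, weight, List.sum_append, List.sum_cons] at *
    omega

/-- Induct on `b - a` for a pattern `b, c, a`: if `a + 1` lies left of `c` then `a + 1, c, a` is
the pattern sought, otherwise `b, c, a + 1` is a pattern with a smaller gap. -/
theorem exists_adjacent_of_contains231 {n : ℕ} {l : List ℕ} (hl : IsPermList n l)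
    (h : Contains231 l) : ∃ L c R i, l = L ++ c :: R ∧ i + 1 < c ∧ i + 1 ∈ L ∧ i ∈ R := by
  obtain ⟨L, c, R, hsplit, b, hb, a, ha, hab, hbc⟩ := contains231_iff.1 h
  have hbn : b ≤ n := (hl.mem_iff.1 (by simp [hsplit, hb])).2
  suffices ∀ d a, b - a = d → a ∈ R → a < b → ∃ i, i + 1 ≤ b ∧ i + 1 ∈ L ∧ i ∈ R by
    obtain ⟨i, hib, hiL, hiR⟩ := this _ a rfl ha hab
    exact ⟨L, c, R, i, hsplit, by omega, hiL, hiR⟩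
  intro d
  induction d using Nat.strong_induction_on with
  | _ d ih =>
    intro a hd ha hab
    by_cases hba : b = a + 1
    · exact ⟨a, hba.ge, hba ▸ hb, ha⟩
    have hv : a + 1 ∈ L ++ c :: R := by
      rw [← hsplit, hl.mem_iff]
      exact ⟨by omega, by omega⟩
    simp only [List.mem_append, List.mem_cons] at hv
    rcases hv with hvL | hvc | hvR
    · exact ⟨a, by omega, hvL, ha⟩
    · omega
    · exact ih _ (by omega) (a + 1) rfl hvR (by omega)

theorem exists_toggleStep_weight_lt {n : ℕ} {l : List ℕ} (hl : IsPermList n l)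
    (h : Contains231 l) : ∃ i, ToggleStep n l (toggle i l) ∧ weight l < weight (toggle i l) := by
  obtain ⟨L, c, R, i, hsplit, hc, hiL, hiR⟩ := exists_adjacent_of_contains231 hl h
  obtain ⟨A, B, C, hl', -, ht⟩ := toggle_of_split hl.nodup hsplit hc hiL hiR (.inr ⟨rfl, rfl⟩)
  have hi := hl.mem_iff.1 (by simp [hsplit, hiR] : i ∈ l)
  have hi₁ := hl.mem_iff.1 (by simp [hsplit, hiL] : i + 1 ∈ l)
  refine ⟨i, ⟨i, hi.1, by omega, rfl⟩, ?_⟩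
  rw [ht, hl']
  exact weight_lt_weight_swap (Nat.lt_succ_self i)

theorem exists_orbitRel_avoids231 {n : ℕ} {l : List ℕ} (hl : IsPermList n l) :
    ∃ m, IsPermList n m ∧ OrbitRel n l m ∧ Avoids231 m := by
  have hfin : {m | IsPermList n m ∧ OrbitRel n l m}.Finite :=
    (List.range' 1 n).permutations.finite_toSet.subset fun m hm => List.mem_permutations.2 hm.1
  obtain ⟨m, ⟨hm, hlm⟩, hmax⟩ := Set.exists_max_image _ weight hfin ⟨l, hl, EqvGen.refl l⟩
  refine ⟨m, hm, hlm, fun h => ?_⟩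
  obtain ⟨i, hstep, hlt⟩ := exists_toggleStep_weight_lt hm h
  exact (hmax _ ⟨hstep.isPermList hm, EqvGen.trans _ _ _ hlm (EqvGen.rel _ _ hstep)⟩).not_gt hlt

theorem existsUnique_avoids231 {n : ℕ} {l : List ℕ} (hl : IsPermList n l) :
    ∃! m, IsPermList n m ∧ OrbitRel n l m ∧ Avoids231 m := by
  obtain ⟨m, hm, hlm, ham⟩ := exists_orbitRel_avoids231 hl
  refine ⟨m, ⟨hm, hlm, ham⟩, fun m' ⟨_, hlm', ham'⟩ => ?_⟩
  have hmm' : OrbitRel n m m' := EqvGen.trans _ _ _ (EqvGen.symm _ _ hlm) hlm'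
  exact (eq_of_orbitRel_of_avoids231 hm hmm' ham ham').symm

/-- Every orbit of `𝒫ₙ` acting on `Sₙ` contains exactly one 231-avoiding permutation and
exactly one 132-avoiding permutation. -/
theorem orbit_unique_avoiders (n : ℕ) (l : List ℕ) (hl : IsPermList n l) :
    (∃! m, IsPermList n m ∧ OrbitRel n l m ∧ Avoids231 m) ∧
      (∃! m, IsPermList n m ∧ OrbitRel n l m ∧ Avoids132 m) := by
  refine ⟨existsUnique_avoids231 hl, ?_⟩
  refine ((Function.Involutive.toPerm _ List.reverse_involutive).existsUnique_congr
    fun m => ?_).2 (existsUnique_avoids231 (isPermList_reverse_iff.2 hl))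
  rw [Function.Involutive.coe_toPerm, isPermList_reverse_iff, orbitRel_reverse_iff hl,
    avoids132_iff_avoids231_reverse]
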